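/- For every Boolean network f of dimension n, the following seven conditions are equivalent: (1) GA(f) is transitive; (2) for all x ∈ 𝔹^n and all y ∈ [x, f(x)], [y, f(y)] ⊆ [x, f(x)]; (3) [x, f(x)] = T_f(x) for all x ∈ 𝔹^n; (4) f = f^T; (5) f = g^T for some Boolean network g of dimension n; (6) TG(f) = GA(f); (7) f^{(S,T)} ⊑ f^{(S∪T)} for all S, T ⊆ [n]. -/

import Mathlib

/-!  Common definitions: Boolean networks on `Fin n → Bool`. -/

/-- The update `f^{(S)}` of the coordinates in `S` according to `f`. -/
def upd {n : ℕ} (f : (Fin n → Bool) → Fin n → Bool) (S : Finset (Fin n)) :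
    (Fin n → Bool) → Fin n → Bool :=
  fun x i => if i ∈ S then f x i else x i

/-- `f^{(S,T)} = f^{(T)} ∘ f^{(S)}`. -/
def upd2 {n : ℕ} (f : (Fin n → Bool) → Fin n → Bool) (S T : Finset (Fin n)) :
    (Fin n → Bool) → Fin n → Bool :=
  upd f T ∘ upd f S

/-- `Δ(x,y)`, the set of coordinates where `x` and `y` differ. -/
def delta {n : ℕ} (x y : Fin n → Bool) : Set (Fin n) := {i | x i ≠ y i}

/-- Hamming distance. -/
noncomputable def hdist {n : ℕ} (x y : Fin n → Bool) : ℕ := (delta x y).ncard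

/-- The interval (subcube) `[x,y]`. -/
def interval {n : ℕ} (x y : Fin n → Bool) : Set (Fin n → Bool) :=
  {z | delta x z ⊆ delta x y}

/-- A subcube of `𝔹^n`: fix the coordinates in `S` to `0` and those in `T` to `1`. -/
def IsSubcube {n : ℕ} (X : Set (Fin n → Bool)) : Prop :=
  ∃ S T : Set (Fin n), Disjoint S T ∧
    X = {x | (∀ i ∈ S, x i = false) ∧ (∀ i ∈ T, x i = true)}

/-- The partial order `f ⊑ g` on Boolean networks. -/
def BNle {n : ℕ} (f g : (Fin n → Bool) → Fin n → Bool) : Prop :=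
  ∀ x, delta x (f x) ⊆ delta x (g x)

/-- A trapspace of `f`: an invariant subcube. -/
def IsTrapspace {n : ℕ} (f : (Fin n → Bool) → Fin n → Bool)
    (X : Set (Fin n → Bool)) : Prop :=
  IsSubcube X ∧ ∀ x ∈ X, f x ∈ X

/-- The collection of all trapspaces of `f`. -/
def trapspaces {n : ℕ} (f : (Fin n → Bool) → Fin n → Bool) :
    Set (Set (Fin n → Bool)) :=
  {X | IsTrapspace f X}

/-- The principal trapspace `T_f(x)`: the smallest trapspace of `f` containing `x`. -/
def Tprin {n : ℕ} (f : (Fin n → Bool) → Fin n → Bool) (x : Fin n → Bool) :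
    Set (Fin n → Bool) :=
  ⋂₀ {X | IsTrapspace f X ∧ x ∈ X}

/-- The collection of principal trapspaces of `f`. -/
def PT {n : ℕ} (f : (Fin n → Bool) → Fin n → Bool) : Set (Set (Fin n → Bool)) :=
  {X | ∃ x, X = Tprin f x}

-- The opposite of `x` in a subcube `X` containing `x`: the coordinate `i` is flipped
-- iff some element of `X` differs from `x` there; so `[x, opp X x] = X` when `X` is a
-- subcube containing `x`.
open scoped Classical in
noncomputable def opp {n : ℕ} (X : Set (Fin n → Bool)) (x : Fin n → Bool) :
    Fin n → Bool :=
  fun i => if ∃ y ∈ X, y i ≠ x i then !(x i) else x i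

/-- The trapping closure `f^T`, characterised by `[x, f^T(x)] = T_f(x)`. -/
noncomputable def trapClosure {n : ℕ} (f : (Fin n → Bool) → Fin n → Bool) :
    (Fin n → Bool) → Fin n → Bool :=
  fun x => opp (Tprin f x) x

/-- The general asynchronous graph of `f`, as a relation on `𝔹^n`. -/
def GA {n : ℕ} (f : (Fin n → Bool) → Fin n → Bool) :
    (Fin n → Bool) → (Fin n → Bool) → Prop :=
  fun x y => ∃ S : Finset (Fin n), y = upd f S x

/-- The asynchronous graph of `f`, as a relation on `𝔹^n`. -/
def Agraph {n : ℕ} (f : (Fin n → Bool) → Fin n → Bool) :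
    (Fin n → Bool) → (Fin n → Bool) → Prop :=
  fun x y => ∃ i : Fin n, y = upd f {i} x

/-- The trapping graph of `f`: an edge `(x,y)` iff `y ∈ T_f(x)`. -/
def TG {n : ℕ} (f : (Fin n → Bool) → Fin n → Bool) :
    (Fin n → Bool) → (Fin n → Bool) → Prop :=
  fun x y => y ∈ Tprin f x

/-- A network is trapping if its general asynchronous graph is transitive. -/
def IsTrapping {n : ℕ} (f : (Fin n → Bool) → Fin n → Bool) : Prop :=
  Transitive (GA f)

/-- A commutative Boolean network: `f^{(i,j)} = f^{(j,i)}` for all `i,j`. -/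
def IsCommutative' {n : ℕ} (f : (Fin n → Bool) → Fin n → Bool) : Prop :=
  ∀ i j : Fin n, upd2 f {i} {j} = upd2 f {j} {i}

/-- `𝒜(x)`: the intersection of all members of `𝒜` containing `x`
(`= 𝔹^n` if no member contains `x`, since `⋂₀ ∅ = univ`). -/
def collAt {n : ℕ} (𝒜 : Set (Set (Fin n → Bool))) (x : Fin n → Bool) :
    Set (Fin n → Bool) :=
  ⋂₀ {A ∈ 𝒜 | x ∈ A}

/-- The network `F(𝒜)`, characterised by `[x, F(𝒜)(x)] = 𝒜(x)`. -/
noncomputable def Fnet {n : ℕ} (𝒜 : Set (Set (Fin n → Bool))) :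
    (Fin n → Bool) → Fin n → Bool :=
  fun x => opp (collAt 𝒜 x) x

/-- A collection of subcubes is pre-principal if `𝒬 = {𝒬(x) : x ∈ 𝔹^n}`. -/
def PrePrincipal {n : ℕ} (𝒬 : Set (Set (Fin n → Bool))) : Prop :=
  𝒬 = {X | ∃ x, X = collAt 𝒬 x}

/-- `λ(𝒜)`: unions of subcollections of `𝒜` that are subcubes. -/
def lamColl {n : ℕ} (𝒜 : Set (Set (Fin n → Bool))) : Set (Set (Fin n → Bool)) :=
  {X | ∃ ℛ ⊆ 𝒜, X = ⋃₀ ℛ ∧ IsSubcube X}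

/-- `μ(𝒜) = {𝒜(x) : x ∈ 𝔹^n}`. -/
def muColl {n : ℕ} (𝒜 : Set (Set (Fin n → Bool))) : Set (Set (Fin n → Bool)) :=
  {X | ∃ x, X = collAt 𝒜 x}

/-- A pre-ideal collection of subcubes. -/
def PreIdeal {n : ℕ} (𝒥 : Set (Set (Fin n → Bool))) : Prop :=
  Set.univ ∈ 𝒥 ∧
  (∀ A ∈ 𝒥, ∀ B ∈ 𝒥, (A ∩ B).Nonempty → A ∩ B ∈ 𝒥) ∧
  (∀ ℛ ⊆ 𝒥, IsSubcube (⋃₀ ℛ) → ⋃₀ ℛ ∈ 𝒥)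

/-- The collection of minimal trapspaces of `f`. -/
def MT {n : ℕ} (f : (Fin n → Bool) → Fin n → Bool) : Set (Set (Fin n → Bool)) :=
  {X | IsTrapspace f X ∧ ∀ Y, IsTrapspace f Y → ¬ Y ⊂ X}

/-- `M(f)`: the union of the minimal trapspaces of `f`. -/
def Mset {n : ℕ} (f : (Fin n → Bool) → Fin n → Bool) : Set (Fin n → Bool) :=
  ⋃₀ MT f

-- The min-trapping extension `f^M`: `[x, f^M(x)] = T_f(x)` if `x ∈ M(f)`,
-- and `f^M(x) = ¬x` otherwise.
open scoped Classical in
noncomputable def minExt {n : ℕ} (f : (Fin n → Bool) → Fin n → Bool) :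
    (Fin n → Bool) → Fin n → Bool :=
  fun x => if x ∈ Mset f then opp (Tprin f x) x else fun i => !(x i)

/-! Every subcube `X ∋ x` is an interval `[x, y]` whose far end `y` is determined by `X`, and the
out-neighbourhood of `x` in `GA(f)` is `[x, f(x)]`. Transitivity of `GA(f)` says that the subcube
`[x, f(x)]` is closed under `f`, i.e. is a trapspace; as it lies in every trapspace containing `x`,
this means `[x, f(x)] = T_f(x) = [x, f^T(x)]`, i.e. `f = f^T`. A network and its trapping closure
have the same trapspaces, so `T_{g^T}(x) = [x, g^T(x)]` for every `g`. Finally, the points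
`f^{(S,T)}(x)` are the ends of the two-step paths of `GA(f)` from `x`, and `f^{(S,T)} ⊑ f^{(S ∪ T)}`
says that such an end lies in `[x, f(x)]`: that it differs from `x` only on `S ∪ T` is automatic. -/

section

variable {n : ℕ}

lemma delta_triangle (a b c : Fin n → Bool) : delta a c ⊆ delta a b ∪ delta b c := by
  intro i hac
  by_cases hab : a i = b i
  · exact Or.inr fun hbc => hac (hab.trans hbc)
  · exact Or.inl hab

lemma eq_of_delta_eq {x a b : Fin n → Bool} (h : delta x a = delta x b) : a = b := by
  funext i
  have hi : x i ≠ a i ↔ x i ≠ b i := Set.ext_iff.mp h i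
  by_cases ha : x i = a i
  · exact ha.symm.trans (not_ne_iff.mp (mt hi.mpr (not_not.mpr ha)))
  · exact (Bool.eq_not_of_ne (Ne.symm ha)).trans (Bool.eq_not_of_ne (Ne.symm (hi.mp ha))).symm

lemma left_mem_interval (x y : Fin n → Bool) : x ∈ interval x y := fun _ hi => absurd rfl hi

lemma right_mem_interval (x y : Fin n → Bool) : y ∈ interval x y := fun _ hi => hi

lemma interval_injective (x : Fin n → Bool) : Function.Injective (interval x) := fun a b h =>
  eq_of_delta_eq <| Set.Subset.antisymm
    (show a ∈ interval x b from h ▸ right_mem_interval x a)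
    (show b ∈ interval x a from h ▸ right_mem_interval x b)

lemma isSubcube_setOf_delta_subset (x : Fin n → Bool) (D : Set (Fin n)) :
    IsSubcube {z | delta x z ⊆ D} := by
  refine ⟨{i | i ∉ D ∧ x i = false}, {i | i ∉ D ∧ x i = true}, ?_, ?_⟩
  · rw [Set.disjoint_left]
    rintro i ⟨-, hfalse⟩ ⟨-, htrue⟩
    exact Bool.false_ne_true (hfalse.symm.trans htrue)
  · ext z
    simp only [Set.mem_ofPred_eq]
    constructor
    · intro hz
      have hxz : ∀ i ∉ D, z i = x i := fun i hi => (not_ne_iff.mp fun h => hi (hz h)).symm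
      exact ⟨fun i ⟨hi, hx⟩ => (hxz i hi).trans hx, fun i ⟨hi, hx⟩ => (hxz i hi).trans hx⟩
    · rintro ⟨hfalse, htrue⟩ i hi
      by_contra hiD
      cases hx : x i
      · exact hi (hx.trans (hfalse i ⟨hiD, hx⟩).symm)
      · exact hi (hx.trans (htrue i ⟨hiD, hx⟩).symm)

lemma isSubcube_interval (x y : Fin n → Bool) : IsSubcube (interval x y) :=
  isSubcube_setOf_delta_subset x (delta x y)

lemma delta_opp (X : Set (Fin n → Bool)) (x : Fin n → Bool) :
    delta x (opp X x) = {i | ∃ y ∈ X, y i ≠ x i} := by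
  classical
  ext i
  simp only [delta, opp, Set.mem_ofPred_eq]
  split_ifs with h
  · exact iff_of_true (by cases x i <;> simp) h
  · exact iff_of_false (by simp) h

lemma IsSubcube.eq_interval_opp {X : Set (Fin n → Bool)} (hX : IsSubcube X)
    {x : Fin n → Bool} (hx : x ∈ X) : X = interval x (opp X x) := by
  ext z
  simp only [interval, Set.mem_ofPred_eq, delta_opp]
  refine ⟨fun hz i hi => ⟨z, hz, Ne.symm hi⟩, fun hz => ?_⟩
  have hzx : ∀ i, (∀ y ∈ X, y i = x i) → z i = x i := fun i hi =>
    not_ne_iff.mp fun h => by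
      obtain ⟨y, hy, hyi⟩ := hz (Ne.symm h)
      exact hyi (hi y hy)
  obtain ⟨S, T, -, rfl⟩ := hX
  exact ⟨fun i hi => (hzx i fun y hy => (hy.1 i hi).trans (hx.1 i hi).symm).trans (hx.1 i hi),
    fun i hi => (hzx i fun y hy => (hy.2 i hi).trans (hx.2 i hi).symm).trans (hx.2 i hi)⟩

lemma IsSubcube.interval_subset {X : Set (Fin n → Bool)} (hX : IsSubcube X)
    {x y : Fin n → Bool} (hx : x ∈ X) (hy : y ∈ X) : interval x y ⊆ X := by
  rw [hX.eq_interval_opp hx] at hy ⊢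
  exact fun z hz i hi => hy (hz hi)

lemma isSubcube_sInter {𝒮 : Set (Set (Fin n → Bool))} {x : Fin n → Bool}
    (h𝒮 : ∀ X ∈ 𝒮, IsSubcube X ∧ x ∈ X) : IsSubcube (⋂₀ 𝒮) := by
  convert isSubcube_setOf_delta_subset x (⋂ X ∈ 𝒮, delta x (opp X x)) using 1
  ext z
  simp only [Set.mem_sInter, Set.mem_ofPred_eq, Set.subset_iInter_iff]
  refine forall₂_congr fun X hX => ?_
  conv_lhs => rw [(h𝒮 X hX).1.eq_interval_opp (h𝒮 X hX).2]
  rfl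

lemma mem_tprin (f : (Fin n → Bool) → Fin n → Bool) (x : Fin n → Bool) : x ∈ Tprin f x :=
  fun _ hX => hX.2

lemma tprin_subset {f : (Fin n → Bool) → Fin n → Bool} {x : Fin n → Bool}
    {X : Set (Fin n → Bool)} (hX : IsTrapspace f X) (hx : x ∈ X) : Tprin f x ⊆ X :=
  Set.sInter_subset_of_mem ⟨hX, hx⟩

lemma isTrapspace_tprin (f : (Fin n → Bool) → Fin n → Bool) (x : Fin n → Bool) :
    IsTrapspace f (Tprin f x) :=
  ⟨isSubcube_sInter fun _ hX => ⟨hX.1.1, hX.2⟩, fun _ hy X hX => hX.1.2 _ (hy X hX)⟩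

lemma tprin_subset_tprin {f : (Fin n → Bool) → Fin n → Bool} {x y : Fin n → Bool}
    (hy : y ∈ Tprin f x) : Tprin f y ⊆ Tprin f x :=
  tprin_subset (isTrapspace_tprin f x) hy

lemma interval_subset_tprin (f : (Fin n → Bool) → Fin n → Bool) (x : Fin n → Bool) :
    interval x (f x) ⊆ Tprin f x :=
  (isTrapspace_tprin f x).1.interval_subset (mem_tprin f x)
    ((isTrapspace_tprin f x).2 x (mem_tprin f x))

lemma tprin_eq_interval_trapClosure (f : (Fin n → Bool) → Fin n → Bool) (x : Fin n → Bool) :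
    Tprin f x = interval x (trapClosure f x) :=
  (isTrapspace_tprin f x).1.eq_interval_opp (mem_tprin f x)

lemma isTrapspace_trapClosure_iff (g : (Fin n → Bool) → Fin n → Bool)
    (X : Set (Fin n → Bool)) : IsTrapspace (trapClosure g) X ↔ IsTrapspace g X := by
  refine ⟨fun hX => ⟨hX.1, fun y hy => ?_⟩, fun hX => ⟨hX.1, fun y hy => ?_⟩⟩
  · have hgy : g y ∈ interval y (trapClosure g y) :=
      tprin_eq_interval_trapClosure g y ▸ (isTrapspace_tprin g y).2 y (mem_tprin g y)
    exact hX.1.interval_subset hy (hX.2 y hy) hgy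
  · have hgTy : trapClosure g y ∈ Tprin g y :=
      (tprin_eq_interval_trapClosure g y).symm ▸ right_mem_interval _ _
    exact tprin_subset hX hy hgTy

lemma tprin_trapClosure (g : (Fin n → Bool) → Fin n → Bool) :
    Tprin (trapClosure g) = Tprin g := by
  funext x
  simp only [Tprin, isTrapspace_trapClosure_iff]

lemma delta_upd (f : (Fin n → Bool) → Fin n → Bool) (S : Finset (Fin n)) (x : Fin n → Bool) :
    delta x (upd f S x) = ↑S ∩ delta x (f x) := by
  ext i
  simp only [delta, upd, Set.mem_ofPred_eq, Set.mem_inter_iff, Finset.mem_coe]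
  by_cases h : i ∈ S <;> simp [h]

lemma upd_mem_interval (f : (Fin n → Bool) → Fin n → Bool) (S : Finset (Fin n))
    (x : Fin n → Bool) : upd f S x ∈ interval x (f x) := by
  change delta x _ ⊆ _
  rw [delta_upd]
  exact Set.inter_subset_right

lemma eq_upd_of_mem_interval {f : (Fin n → Bool) → Fin n → Bool} {x y : Fin n → Bool}
    (hy : y ∈ interval x (f x)) : y = upd f {i | x i ≠ y i} x := by
  funext i
  simp only [upd, Finset.mem_filter, Finset.mem_univ, true_and]
  split_ifs with h
  · exact (Bool.eq_not_of_ne (Ne.symm h)).trans (Bool.eq_not_of_ne (Ne.symm (hy h))).symm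
  · exact (not_ne_iff.mp h).symm

lemma ga_iff_mem_interval {f : (Fin n → Bool) → Fin n → Bool} {x y : Fin n → Bool} :
    GA f x y ↔ y ∈ interval x (f x) :=
  ⟨fun ⟨S, hS⟩ => hS ▸ upd_mem_interval f S x, fun hy => ⟨_, eq_upd_of_mem_interval hy⟩⟩

lemma setOf_ga (f : (Fin n → Bool) → Fin n → Bool) (x : Fin n → Bool) :
    {y | GA f x y} = interval x (f x) :=
  Set.ext fun _ => ga_iff_mem_interval

end

/-- seven equivalent definitions of trapping networks. -/
theorem stmt2 (n : ℕ) (f : (Fin n → Bool) → Fin n → Bool) :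
    List.TFAE [
      Transitive (GA f),
      ∀ x : Fin n → Bool, ∀ y ∈ interval x (f x), interval y (f y) ⊆ interval x (f x),
      ∀ x : Fin n → Bool, interval x (f x) = Tprin f x,
      f = trapClosure f,
      ∃ g : (Fin n → Bool) → Fin n → Bool, f = trapClosure g,
      TG f = GA f,
      ∀ S T : Finset (Fin n), BNle (upd2 f S T) (upd f (S ∪ T))
    ] := by
  tfae_have 1 ↔ 2 := by
    simp only [Transitive, ga_iff_mem_interval]
    exact ⟨fun h x y hy z hz => h hy hz, fun h x y z hy hz => h x y hy hz⟩
  tfae_have 2 → 3 := by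
    intro h2 x
    exact (interval_subset_tprin f x).antisymm (tprin_subset ⟨isSubcube_interval x (f x),
      fun y hy => h2 x y hy (right_mem_interval y (f y))⟩ (left_mem_interval x (f x)))
  tfae_have 3 → 2 := by
    intro h3 x y hy
    rw [h3 x] at hy ⊢
    exact (interval_subset_tprin f y).trans (tprin_subset_tprin hy)
  tfae_have 3 → 4 := fun h3 =>
    funext fun x => interval_injective x ((h3 x).trans (tprin_eq_interval_trapClosure f x))
  tfae_have 4 → 5 := fun h4 => ⟨f, h4⟩
  tfae_have 5 → 3 := by
    rintro ⟨g, rfl⟩ x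
    rw [tprin_trapClosure, tprin_eq_interval_trapClosure]
  tfae_have 3 ↔ 6 := by
    rw [funext_iff]
    refine forall_congr' fun x => ?_
    change _ ↔ Tprin f x = {y | GA f x y}
    rw [setOf_ga, eq_comm]
  tfae_have 2 → 7 := by
    intro h2 S T x
    have hy := upd_mem_interval f S x
    have hz : upd2 f S T x ∈ interval x (f x) := h2 x _ hy (upd_mem_interval f T _)
    have hST : delta x (upd2 f S T x) ⊆ ↑(S ∪ T) := by
      refine (delta_triangle _ (upd f S x) _).trans ?_
      rw [Finset.coe_union, delta_upd, upd2, Function.comp_apply, delta_upd]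
      exact Set.union_subset_union Set.inter_subset_left Set.inter_subset_left
    rw [delta_upd]
    exact Set.subset_inter hST hz
  tfae_have 7 → 2 := by
    intro h7 x y hy z hz
    obtain ⟨S, rfl⟩ := ga_iff_mem_interval.mpr hy
    obtain ⟨T, rfl⟩ := ga_iff_mem_interval.mpr hz
    exact (h7 S T x).trans (upd_mem_interval f (S ∪ T) x)
  tfae_finish
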